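/- arXiv:1906.03419 — 5 statements merged into one kernel-verified Lean document; each statement's English description precedes it below -/
import Mathlib

section
/- Let d ≥ 1 be an integer, let (a_i)_{i ∈ ℤ^d} be nonnegative real numbers, and let (q_i)_{i ∈ ℤ^d} be independent, identically distributed, nonnegative random variables on a probability space (Ω, 𝒜, ℚ). Then for every positive integer M, E[ exp( − Σ_{i ∈ ℤ^d} a_i q_i ) ] ≤ E[ exp( − Σ_{i ∈ {0,…,M−1}^d} q_i · ( Σ_{i' ∈ ℤ^d, i' ≡ i (mod M ℤ^d)} a_{i'} ) ) ], where the sums are understood as values in [0,∞] and exp(−∞) = 0. -/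
open MeasureTheory ProbabilityTheory
open scoped ENNReal
open Filter
open scoped Topology

noncomputable section

/-- `exp(-s)` for `s ∈ [0,∞]`, with the convention `exp(-∞) = 0`. -/
def negExp (s : ℝ≥0∞) : ℝ := if s = ∞ then 0 else Real.exp (-s.toReal)

namespace PeriodizationAux

def pE (s : ℝ≥0∞) : ℝ≥0∞ := ENNReal.ofReal (negExp s)

lemma pE_top : pE ∞ = 0 := by simp [pE, negExp]

lemma pE_ne_top {s : ℝ≥0∞} (h : s ≠ ∞) :
    pE s = ENNReal.ofReal (Real.exp (-s.toReal)) := by simp [pE, negExp, h]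

lemma pE_ofReal_of_nonneg {x : ℝ} (hx : 0 ≤ x) :
    pE (ENNReal.ofReal x) = ENNReal.ofReal (Real.exp (-x)) := by
  rw [pE_ne_top ENNReal.ofReal_ne_top, ENNReal.toReal_ofReal hx]

lemma pE_add (s t : ℝ≥0∞) : pE (s + t) = pE s * pE t := by
  rcases eq_or_ne s ∞ with hs | hs
  · simp [hs, pE_top]
  rcases eq_or_ne t ∞ with ht | ht
  · simp [ht, pE_top]
  rw [pE_ne_top (by simp [hs, ht]), pE_ne_top hs, pE_ne_top ht,
    ENNReal.toReal_add hs ht, neg_add, Real.exp_add,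
    ENNReal.ofReal_mul (Real.exp_nonneg _)]

lemma pE_sum {ι : Type*} (s : Finset ι) (f : ι → ℝ≥0∞) :
    pE (∑ i ∈ s, f i) = ∏ i ∈ s, pE (f i) := by
  classical
  induction s using Finset.cons_induction with
  | empty => simp [pE, negExp]
  | cons j s hj ih => rw [Finset.sum_cons, Finset.prod_cons, pE_add, ih]

lemma pE_le_one (s : ℝ≥0∞) : pE s ≤ 1 := by
  rcases eq_or_ne s ∞ with hs | hs
  · simp [hs, pE_top]
  · rw [pE_ne_top hs]
    refine ENNReal.ofReal_le_one.2 (Real.exp_le_one_iff.2 (by simp [ENNReal.toReal_nonneg]))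

lemma pE_antitone : Antitone pE := by
  intro s t hst
  rcases eq_or_ne t ∞ with ht | ht
  · simp [ht, pE_top]
  have hs : s ≠ ∞ := fun h => ht (top_le_iff.1 (h ▸ hst))
  rw [pE_ne_top hs, pE_ne_top ht]
  exact ENNReal.ofReal_le_ofReal (Real.exp_le_exp.2 (neg_le_neg
    ((ENNReal.toReal_le_toReal hs ht).2 hst)))

lemma pE_continuous : Continuous pE := by
  rw [continuous_iff_continuousAt]
  intro s
  rcases eq_or_ne s ∞ with hs | hs
  · subst hs
    rw [ContinuousAt, pE_top, ENNReal.tendsto_nhds_zero]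
    intro ε hε
    rcases eq_or_ne ε ∞ with hε' | hε'
    · exact Eventually.of_forall fun _ => hε' ▸ le_top
    have hεpos : 0 < ε.toReal := ENNReal.toReal_pos hε.ne' hε'
    obtain ⟨c, hc⟩ : ∃ c : ℝ, Real.exp c < ε.toReal := by
      obtain ⟨c, hc⟩ := eventually_atBot.mp
        (Real.tendsto_exp_atBot.eventually_lt_const hεpos)
      exact ⟨c, hc c le_rfl⟩
    set r : ℝ := max 0 (-c) with hr
    filter_upwards [Ioi_mem_nhds (show ENNReal.ofReal r < ∞ from ENNReal.ofReal_lt_top)]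
      with t ht
    rcases eq_or_ne t ∞ with ht' | ht'
    · simp [ht', pE_top]
    rw [pE_ne_top ht']
    have h1 : r < t.toReal := (ENNReal.ofReal_lt_iff_lt_toReal (le_max_left _ _) ht').1 ht
    have h2 : Real.exp (-t.toReal) ≤ Real.exp c := by
      apply Real.exp_le_exp.2
      have : -c ≤ r := le_max_right _ _
      linarith
    calc ENNReal.ofReal (Real.exp (-t.toReal)) ≤ ENNReal.ofReal ε.toReal :=
          ENNReal.ofReal_le_ofReal (h2.trans hc.le)
      _ = ε := ENNReal.ofReal_toReal hε'
  · have h1 : Tendsto (fun t : ℝ≥0∞ => ENNReal.ofReal (Real.exp (-t.toReal))) (𝓝 s)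
        (𝓝 (ENNReal.ofReal (Real.exp (-s.toReal)))) := by
      exact (ENNReal.continuous_ofReal.tendsto _).comp
        ((Real.continuous_exp.tendsto _).comp ((continuous_neg.tendsto _).comp
          (ENNReal.tendsto_toReal hs)))
    have h2 : ∀ᶠ t in 𝓝 s, (fun t : ℝ≥0∞ => ENNReal.ofReal (Real.exp (-t.toReal))) t = pE t := by
      filter_upwards [compl_singleton_mem_nhds hs] with t ht
      exact (pE_ne_top ht).symm
    rw [ContinuousAt, pE_ne_top hs]
    exact h1.congr' h2

lemma pE_measurable : Measurable pE := pE_continuous.measurable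


variable {Ω : Type*} [MeasurableSpace Ω]

lemma key_rearrange {A a B b : ℝ≥0∞} (ha : a ≤ A) (hb : b ≤ B) :
    A * b + a * B ≤ A * B + a * b := by
  calc A * b + a * B = (a * b + (A - a) * b) + a * B := by
        rw [← add_mul, add_tsub_cancel_of_le ha]
    _ ≤ (a * b + (A - a) * B) + a * B := by gcongr
    _ = (a + (A - a)) * B + a * b := by ring
    _ = A * B + a * b := by rw [add_tsub_cancel_of_le ha]

lemma chebyshev (μ : Measure Ω) [IsProbabilityMeasure μ] {X : Ω → ℝ} (hX : Measurable X)
    {s t : ℝ} (hs : 0 ≤ s) (ht : 0 ≤ t) :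
    (∫⁻ ω, ENNReal.ofReal (Real.exp (-(s * X ω))) ∂μ) *
      (∫⁻ ω, ENNReal.ofReal (Real.exp (-(t * X ω))) ∂μ) ≤
      ∫⁻ ω, ENNReal.ofReal (Real.exp (-((s + t) * X ω))) ∂μ := by
  set f : ℝ → ℝ≥0∞ := fun x => ENNReal.ofReal (Real.exp (-(s * x))) with hfdef
  set g : ℝ → ℝ≥0∞ := fun x => ENNReal.ofReal (Real.exp (-(t * x))) with hgdef
  have hf : Measurable f :=
    ENNReal.measurable_ofReal.comp (Real.measurable_exp.comp
      (measurable_neg.comp (measurable_const_mul s)))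
  have hg : Measurable g :=
    ENNReal.measurable_ofReal.comp (Real.measurable_exp.comp
      (measurable_neg.comp (measurable_const_mul t)))
  have hfg : ∀ x, f x * g x = ENNReal.ofReal (Real.exp (-((s + t) * x))) := by
    intro x
    rw [hfdef, hgdef]
    simp only
    rw [← ENNReal.ofReal_mul (Real.exp_nonneg _), ← Real.exp_add]
    ring_nf
  have hfmono : ∀ {x y : ℝ}, x ≤ y → f y ≤ f x := by
    intro x y hxy
    exact ENNReal.ofReal_le_ofReal (Real.exp_le_exp.2 (by nlinarith))
  have hgmono : ∀ {x y : ℝ}, x ≤ y → g y ≤ g x := by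
    intro x y hxy
    exact ENNReal.ofReal_le_ofReal (Real.exp_le_exp.2 (by nlinarith))
  have key : ∀ x y : ℝ, f x * g y + g x * f y ≤ f x * g x + f y * g y := by
    intro x y
    rcases le_total x y with h | h
    · have h1 := key_rearrange (hfmono h) (hgmono h)
      calc f x * g y + g x * f y = f x * g y + f y * g x := by ring
        _ ≤ f x * g x + f y * g y := h1
    · have h1 := key_rearrange (hfmono h) (hgmono h)
      calc f x * g y + g x * f y = f y * g x + g y * f x := by ring
        _ ≤ f y * g y + f x * g x := by
            calc f y * g x + g y * f x = f y * g x + f x * g y := by ring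
              _ ≤ f y * g y + f x * g x := by
                  have := h1
                  calc f y * g x + f x * g y = f y * g x + f x * g y := rfl
                    _ ≤ f y * g y + f x * g x := by
                        have h2 := key_rearrange (hfmono h) (hgmono h)
                        -- h2 : f y * g x + f x * g y ≤ f y * g y + f x * g x
                        exact h2
        _ = f x * g x + f y * g y := by ring
  have hμf : AEMeasurable (fun ω => f (X ω)) μ := (hf.comp hX).aemeasurable
  have hμg : AEMeasurable (fun ω => g (X ω)) μ := (hg.comp hX).aemeasurable
  have e1 : ∫⁻ z : Ω × Ω, f (X z.1) * g (X z.2) ∂(μ.prod μ) =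
      (∫⁻ ω, f (X ω) ∂μ) * ∫⁻ ω, g (X ω) ∂μ := lintegral_prod_mul hμf hμg
  have e2 : ∫⁻ z : Ω × Ω, g (X z.1) * f (X z.2) ∂(μ.prod μ) =
      (∫⁻ ω, g (X ω) ∂μ) * ∫⁻ ω, f (X ω) ∂μ := lintegral_prod_mul hμg hμf
  have e3 : ∫⁻ z : Ω × Ω, f (X z.1) * g (X z.1) ∂(μ.prod μ) =
      ∫⁻ ω, f (X ω) * g (X ω) ∂μ := by
    have := lintegral_prod_mul (μ := μ) (ν := μ)
      (f := fun ω => f (X ω) * g (X ω)) (g := fun _ => (1 : ℝ≥0∞))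
      (hμf.mul hμg) aemeasurable_const
    simpa using this
  have e4 : ∫⁻ z : Ω × Ω, f (X z.2) * g (X z.2) ∂(μ.prod μ) =
      ∫⁻ ω, f (X ω) * g (X ω) ∂μ := by
    have := lintegral_prod_mul (μ := μ) (ν := μ)
      (f := fun _ => (1 : ℝ≥0∞)) (g := fun ω => f (X ω) * g (X ω))
      aemeasurable_const (hμf.mul hμg)
    simpa using this
  have hmeas1 : AEMeasurable (fun z : Ω × Ω => f (X z.1) * g (X z.2)) (μ.prod μ) := by
    exact (((hf.comp hX).comp measurable_fst).mul ((hg.comp hX).comp measurable_snd)).aemeasurable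
  have hmeas2 : AEMeasurable (fun z : Ω × Ω => g (X z.1) * f (X z.2)) (μ.prod μ) := by
    exact (((hg.comp hX).comp measurable_fst).mul ((hf.comp hX).comp measurable_snd)).aemeasurable
  have lhs_eq : ∫⁻ z : Ω × Ω, (f (X z.1) * g (X z.2) + g (X z.1) * f (X z.2)) ∂(μ.prod μ) =
      (∫⁻ ω, f (X ω) ∂μ) * (∫⁻ ω, g (X ω) ∂μ) +
        (∫⁻ ω, g (X ω) ∂μ) * ∫⁻ ω, f (X ω) ∂μ := by
    rw [lintegral_add_left' hmeas1, e1, e2]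
  have hmeas3 : AEMeasurable (fun z : Ω × Ω => f (X z.1) * g (X z.1)) (μ.prod μ) :=
    (((hf.comp hX).comp measurable_fst).mul ((hg.comp hX).comp measurable_fst)).aemeasurable
  have rhs_eq : ∫⁻ z : Ω × Ω, (f (X z.1) * g (X z.1) + f (X z.2) * g (X z.2)) ∂(μ.prod μ) =
      (∫⁻ ω, f (X ω) * g (X ω) ∂μ) + ∫⁻ ω, f (X ω) * g (X ω) ∂μ := by
    rw [lintegral_add_left' hmeas3, e3, e4]
  have big : (∫⁻ ω, f (X ω) ∂μ) * (∫⁻ ω, g (X ω) ∂μ) +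
      (∫⁻ ω, g (X ω) ∂μ) * (∫⁻ ω, f (X ω) ∂μ) ≤
      (∫⁻ ω, f (X ω) * g (X ω) ∂μ) + ∫⁻ ω, f (X ω) * g (X ω) ∂μ := by
    rw [← lhs_eq, ← rhs_eq]
    exact lintegral_mono fun z => key (X z.1) (X z.2)
  have big2 : 2 * ((∫⁻ ω, f (X ω) ∂μ) * ∫⁻ ω, g (X ω) ∂μ) ≤
      2 * ∫⁻ ω, f (X ω) * g (X ω) ∂μ := by
    rw [two_mul, two_mul]
    calc (∫⁻ ω, f (X ω) ∂μ) * (∫⁻ ω, g (X ω) ∂μ) + (∫⁻ ω, f (X ω) ∂μ) * ∫⁻ ω, g (X ω) ∂μ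
        = (∫⁻ ω, f (X ω) ∂μ) * (∫⁻ ω, g (X ω) ∂μ) +
          (∫⁻ ω, g (X ω) ∂μ) * ∫⁻ ω, f (X ω) ∂μ := by ring
      _ ≤ _ := big
  have := (ENNReal.mul_le_mul_iff_right (a := 2) (by norm_num) (by norm_num)).1 big2
  calc (∫⁻ ω, f (X ω) ∂μ) * ∫⁻ ω, g (X ω) ∂μ ≤ ∫⁻ ω, f (X ω) * g (X ω) ∂μ := this
    _ = _ := lintegral_congr fun ω => hfg (X ω)

lemma prod_pE_le {ι : Type*} (μ : Measure Ω) [IsProbabilityMeasure μ] {X : Ω → ℝ}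
    (hX : Measurable X) (c : ι → ℝ) (hc : ∀ i, 0 ≤ c i) (G : Finset ι) :
    ∏ i ∈ G, ∫⁻ ω, ENNReal.ofReal (Real.exp (-(c i * X ω))) ∂μ ≤
      ∫⁻ ω, ENNReal.ofReal (Real.exp (-((∑ i ∈ G, c i) * X ω))) ∂μ := by
  classical
  induction G using Finset.cons_induction with
  | empty => simp
  | cons j G hj ih =>
    rw [Finset.prod_cons, Finset.sum_cons]
    calc (∫⁻ ω, ENNReal.ofReal (Real.exp (-(c j * X ω))) ∂μ) *
          ∏ i ∈ G, ∫⁻ ω, ENNReal.ofReal (Real.exp (-(c i * X ω))) ∂μ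
        ≤ (∫⁻ ω, ENNReal.ofReal (Real.exp (-(c j * X ω))) ∂μ) *
          ∫⁻ ω, ENNReal.ofReal (Real.exp (-((∑ i ∈ G, c i) * X ω))) ∂μ :=
          mul_le_mul_right ih _
      _ ≤ _ := chebyshev μ hX (hc j) (Finset.sum_nonneg fun i _ => hc i)

lemma lintegral_prod_eq_prod {ι : Type*} (μ : Measure Ω) [IsProbabilityMeasure μ]
    (g : ι → Ω → ℝ≥0∞) (hg : ∀ i, Measurable (g i))
    (hindep : iIndepFun g μ) (s : Finset ι) :
    ∫⁻ ω, ∏ i ∈ s, g i ω ∂μ = ∏ i ∈ s, ∫⁻ ω, g i ω ∂μ := by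
  classical
  induction s using Finset.cons_induction with
  | empty => simp
  | cons j s hj ih =>
    have hstep : IndepFun (∏ i ∈ s, g i) (g j) μ :=
      hindep.indepFun_finsetProd_of_notMem hg hj
    have hprodmeas : Measurable (∏ i ∈ s, g i) := by
      have : (∏ i ∈ s, g i) = fun ω => ∏ i ∈ s, g i ω := by
        funext ω; exact Finset.prod_apply ω s g
      rw [this]
      exact Finset.measurable_prod s fun i _ => hg i
    have h2 := lintegral_mul_eq_lintegral_mul_lintegral_of_indepFun hprodmeas (hg j) hstep
    simp only [Finset.prod_cons]
    calc ∫⁻ ω, g j ω * ∏ i ∈ s, g i ω ∂μ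
        = ∫⁻ ω, ((∏ i ∈ s, g i) * g j) ω ∂μ := by
          apply lintegral_congr
          intro ω
          simp [Finset.prod_apply, mul_comm]
      _ = (∫⁻ ω, (∏ i ∈ s, g i) ω ∂μ) * ∫⁻ ω, g j ω ∂μ := h2
      _ = (∫⁻ ω, ∏ i ∈ s, g i ω ∂μ) * ∫⁻ ω, g j ω ∂μ := by
          congr 1
          apply lintegral_congr
          intro ω
          simp [Finset.prod_apply]
      _ = (g j |> fun _ => (∏ i ∈ s, ∫⁻ ω, g i ω ∂μ) * ∫⁻ ω, g j ω ∂μ) := by rw [ih]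
      _ = (∫⁻ ω, g j ω ∂μ) * ∏ i ∈ s, ∫⁻ ω, g i ω ∂μ := by rw [mul_comm]

end PeriodizationAux

open PeriodizationAux

/-- Periodization can only increase the Laplace functional: for i.i.d. nonnegative
random variables `q_i`, `i ∈ ℤ^d`, and nonnegative coefficients `a_i`,
`E[exp(-Σ_{i ∈ ℤ^d} a_i q_i)] ≤ E[exp(-Σ_{i ∈ {0,…,M-1}^d} q_i Σ_{i' ≡ i (mod Mℤ^d)} a_{i'})]`. -/
theorem periodization_le (d : ℕ) (hd : 1 ≤ d)
    {Ω : Type*} [MeasurableSpace Ω] (Q : Measure Ω) [IsProbabilityMeasure Q]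
    (a : (Fin d → ℤ) → ℝ) (ha : ∀ i, 0 ≤ a i)
    (q : (Fin d → ℤ) → Ω → ℝ) (hmeas : ∀ i, Measurable (q i))
    (hnonneg : ∀ i ω, 0 ≤ q i ω)
    (hindep : iIndepFun q Q)
    (hident : ∀ i j, IdentDistrib (q i) (q j) Q Q)
    (M : ℕ) (hM : 0 < M) :
    ∫⁻ ω, ENNReal.ofReal (negExp (∑' i : Fin d → ℤ, ENNReal.ofReal (a i * q i ω))) ∂Q ≤
      ∫⁻ ω, ENNReal.ofReal (negExp (∑ i₀ : Fin d → Fin M,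
          ENNReal.ofReal (q (fun k => ((i₀ k : ℕ) : ℤ)) ω) *
            ∑' j : Fin d → ℤ,
              ENNReal.ofReal (a (fun k => ((i₀ k : ℕ) : ℤ) + (M : ℤ) * j k)))) ∂Q := by
  classical
  have hMZ : ((M : ℤ)) ≠ 0 := by exact_mod_cast hM.ne'
  have hMZpos : (0 : ℤ) < (M : ℤ) := by exact_mod_cast hM
  set rep : (Fin d → Fin M) → (Fin d → ℤ) := fun i₀ k => ((i₀ k : ℕ) : ℤ) with hrep_def
  have hmodlt : ∀ n : ℤ, (n % (M : ℤ)).toNat < M := by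
    intro n
    have h1 : 0 ≤ n % (M : ℤ) := Int.emod_nonneg _ hMZ
    have h2 : n % (M : ℤ) < M := Int.emod_lt_of_pos _ hMZpos
    omega
  set r : (Fin d → ℤ) → (Fin d → Fin M) := fun i k => ⟨(i k % (M : ℤ)).toNat, hmodlt _⟩
    with hr_def
  have hrep_mod : ∀ (i₀ : Fin d → Fin M) (k : Fin d),
      ((i₀ k : ℕ) : ℤ) % (M : ℤ) = ((i₀ k : ℕ) : ℤ) :=
    fun i₀ k => Int.emod_eq_of_lt (by positivity) (by exact_mod_cast (i₀ k).2)
  have hr_rep : ∀ i₀, r (rep i₀) = i₀ := by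
    intro i₀; funext k; apply Fin.ext
    show (((i₀ k : ℕ) : ℤ) % (M : ℤ)).toNat = (i₀ k : ℕ)
    rw [hrep_mod i₀ k]; exact Int.toNat_natCast _
  have hrep_inj : Function.Injective rep := by
    intro x y hxy
    funext k
    have h : ((x k : ℕ) : ℤ) = ((y k : ℕ) : ℤ) := congrFun hxy k
    exact Fin.ext (by exact_mod_cast h)
  set cls : (Fin d → Fin M) → (Fin d → ℤ) → ℝ≥0∞ :=
    fun i₀ i => if r i = i₀ then ENNReal.ofReal (a i) else 0 with hcls_def
  set A : (Fin d → Fin M) → ℝ≥0∞ := fun i₀ => ∑' i, cls i₀ i with hA_def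
  have htsum : ∀ i₀ : Fin d → Fin M,
      (∑' j : Fin d → ℤ,
        ENNReal.ofReal (a (fun k => ((i₀ k : ℕ) : ℤ) + (M : ℤ) * j k))) = A i₀ := by
    intro i₀
    have hre : ∀ j : Fin d → ℤ,
        r (fun k => ((i₀ k : ℕ) : ℤ) + (M : ℤ) * j k) = i₀ := by
      intro j; funext k; apply Fin.ext
      show ((((i₀ k : ℕ) : ℤ) + (M : ℤ) * j k) % (M : ℤ)).toNat = (i₀ k : ℕ)
      rw [Int.add_mul_emod_self_left, hrep_mod i₀ k]
      exact Int.toNat_natCast _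
    have he_inj : Function.Injective
        (fun (j : Fin d → ℤ) (k : Fin d) => ((i₀ k : ℕ) : ℤ) + (M : ℤ) * j k) := by
      intro x y hxy
      funext k
      have h : ((i₀ k : ℕ) : ℤ) + (M : ℤ) * x k = ((i₀ k : ℕ) : ℤ) + (M : ℤ) * y k :=
        congrFun hxy k
      exact mul_left_cancel₀ hMZ (add_left_cancel h)
    have hsupp : Function.support (cls i₀) ⊆
        Set.range (fun (j : Fin d → ℤ) (k : Fin d) => ((i₀ k : ℕ) : ℤ) + (M : ℤ) * j k) := by
      intro i hi
      have hri : r i = i₀ := by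
        by_contra h
        exact hi (by simp [hcls_def, h])
      refine ⟨fun k => i k / (M : ℤ), ?_⟩
      funext k
      have h2 : (i k % (M : ℤ)).toNat = (i₀ k : ℕ) := congrArg Fin.val (congrFun hri k)
      have h3 : 0 ≤ i k % (M : ℤ) := Int.emod_nonneg _ hMZ
      have h1 : i k % (M : ℤ) = ((i₀ k : ℕ) : ℤ) := by omega
      show ((i₀ k : ℕ) : ℤ) + (M : ℤ) * (i k / (M : ℤ)) = i k
      rw [← h1]
      exact Int.emod_add_mul_ediv _ _
    have heq := Function.Injective.tsum_eq he_inj (f := cls i₀) hsupp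
    refine Eq.trans (tsum_congr fun j => ?_) heq
    simp [hcls_def, hre j]
  set istar : Fin d → ℤ := fun _ => (0 : ℤ) with histar_def
  set φ : ℝ → ℝ≥0∞ :=
    fun c => ∫⁻ ω, ENNReal.ofReal (Real.exp (-(c * q istar ω))) ∂Q with hφ_def
  have hfm_meas : ∀ c : ℝ, Measurable (fun x : ℝ => ENNReal.ofReal (Real.exp (-(c * x)))) :=
    fun c => ENNReal.measurable_ofReal.comp (Real.measurable_exp.comp
      (measurable_neg.comp (measurable_const_mul c)))
  have hφ : ∀ (i : Fin d → ℤ) (c : ℝ),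
      (∫⁻ ω, ENNReal.ofReal (Real.exp (-(c * q i ω))) ∂Q) = φ c := by
    intro i c
    exact ((hident i istar).comp (hfm_meas c)).lintegral_eq
  set S : Finset (Fin d → ℤ) → (Fin d → Fin M) → ℝ :=
    fun F i₀ => ∑ i ∈ F.filter (fun i => r i = i₀), a i with hS_def
  have hS_nonneg : ∀ F i₀, 0 ≤ S F i₀ := fun F i₀ => Finset.sum_nonneg fun i _ => ha i
  have hSsum : ∀ F i₀, ENNReal.ofReal (S F i₀) = ∑ i ∈ F, cls i₀ i := by
    intro F i₀
    simp only [hS_def, hcls_def]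
    rw [ENNReal.ofReal_sum_of_nonneg (fun i _ => ha i), Finset.sum_filter]
  have stepA : ∀ F : Finset (Fin d → ℤ),
      (∫⁻ ω, ENNReal.ofReal (negExp (∑' i : Fin d → ℤ, ENNReal.ofReal (a i * q i ω))) ∂Q) ≤
        ∏ i₀ : Fin d → Fin M, φ (S F i₀) := by
    intro F
    have a1 : (∫⁻ ω, ENNReal.ofReal
          (negExp (∑' i : Fin d → ℤ, ENNReal.ofReal (a i * q i ω))) ∂Q) ≤
        ∫⁻ ω, pE (∑ i ∈ F, ENNReal.ofReal (a i * q i ω)) ∂Q :=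
      lintegral_mono fun ω => pE_antitone (ENNReal.sum_le_tsum F)
    have a2 : (∫⁻ ω, pE (∑ i ∈ F, ENNReal.ofReal (a i * q i ω)) ∂Q) =
        ∫⁻ ω, ∏ i ∈ F, ENNReal.ofReal (Real.exp (-(a i * q i ω))) ∂Q := by
      refine lintegral_congr fun ω => ?_
      rw [pE_sum]
      exact Finset.prod_congr rfl fun i _ =>
        pE_ofReal_of_nonneg (mul_nonneg (ha i) (hnonneg i ω))
    have hind' : iIndepFun
        (fun i ω => ENNReal.ofReal (Real.exp (-(a i * q i ω)))) Q :=
      hindep.comp (fun i x => ENNReal.ofReal (Real.exp (-(a i * x))))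
        (fun i => hfm_meas (a i))
    have a3 : (∫⁻ ω, ∏ i ∈ F, ENNReal.ofReal (Real.exp (-(a i * q i ω))) ∂Q) =
        ∏ i ∈ F, ∫⁻ ω, ENNReal.ofReal (Real.exp (-(a i * q i ω))) ∂Q :=
      lintegral_prod_eq_prod Q _ (fun i => (hfm_meas (a i)).comp (hmeas i)) hind' F
    have a4 : (∏ i ∈ F, ∫⁻ ω, ENNReal.ofReal (Real.exp (-(a i * q i ω))) ∂Q) =
        ∏ i ∈ F, φ (a i) := Finset.prod_congr rfl fun i _ => hφ i (a i)
    have a5 : (∏ i ∈ F, φ (a i)) =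
        ∏ i₀ : Fin d → Fin M, ∏ i ∈ F.filter (fun i => r i = i₀), φ (a i) :=
      (Finset.prod_fiberwise_of_maps_to (fun i _ => Finset.mem_univ (r i)) _).symm
    have a6 : ∀ i₀ : Fin d → Fin M,
        (∏ i ∈ F.filter (fun i => r i = i₀), φ (a i)) ≤ φ (S F i₀) := fun i₀ =>
      prod_pE_le Q (hmeas istar) a ha (F.filter (fun i => r i = i₀))
    exact ((((a1.trans_eq a2).trans_eq a3).trans_eq a4).trans_eq a5).trans
      (Finset.prod_le_prod' fun i₀ _ => a6 i₀)
  have stepB : ∀ F : Finset (Fin d → ℤ),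
      (∏ i₀ : Fin d → Fin M, φ (S F i₀)) =
        ∫⁻ ω, pE (∑ i₀ : Fin d → Fin M,
          ENNReal.ofReal (q (rep i₀) ω) * ENNReal.ofReal (S F i₀)) ∂Q := by
    intro F
    have hind' : iIndepFun
        (fun i ω => ENNReal.ofReal (Real.exp (-(S F (r i) * q i ω)))) Q :=
      hindep.comp (fun i x => ENNReal.ofReal (Real.exp (-(S F (r i) * x))))
        (fun i => hfm_meas _)
    have b1 : ∀ ω, pE (∑ i₀ : Fin d → Fin M,
          ENNReal.ofReal (q (rep i₀) ω) * ENNReal.ofReal (S F i₀)) =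
        ∏ i₀ : Fin d → Fin M,
          ENNReal.ofReal (Real.exp (-(S F (r (rep i₀)) * q (rep i₀) ω))) := by
      intro ω
      rw [pE_sum]
      refine Finset.prod_congr rfl fun i₀ _ => ?_
      rw [← ENNReal.ofReal_mul (hnonneg _ ω),
        pE_ofReal_of_nonneg (mul_nonneg (hnonneg _ ω) (hS_nonneg F i₀)), hr_rep i₀,
        mul_comm (q (rep i₀) ω) (S F i₀)]
    have hinjOn : ∀ x ∈ (Finset.univ : Finset (Fin d → Fin M)), ∀ y ∈ Finset.univ,
        rep x = rep y → x = y := fun x _ y _ h => hrep_inj h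
    calc (∏ i₀ : Fin d → Fin M, φ (S F i₀))
        = ∏ i₀ : Fin d → Fin M,
            ∫⁻ ω, ENNReal.ofReal (Real.exp (-(S F (r (rep i₀)) * q (rep i₀) ω))) ∂Q := by
          refine Finset.prod_congr rfl fun i₀ _ => ?_
          rw [hr_rep i₀]
          exact (hφ (rep i₀) (S F i₀)).symm
      _ = ∏ i ∈ Finset.univ.image rep,
            ∫⁻ ω, ENNReal.ofReal (Real.exp (-(S F (r i) * q i ω))) ∂Q :=
          (Finset.prod_image (f := fun i => ∫⁻ ω,
            ENNReal.ofReal (Real.exp (-(S F (r i) * q i ω))) ∂Q) hinjOn).symm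
      _ = ∫⁻ ω, ∏ i ∈ Finset.univ.image rep,
            ENNReal.ofReal (Real.exp (-(S F (r i) * q i ω))) ∂Q :=
          (lintegral_prod_eq_prod Q _ (fun i => (hfm_meas _).comp (hmeas i)) hind' _).symm
      _ = ∫⁻ ω, ∏ i₀ : Fin d → Fin M,
            ENNReal.ofReal (Real.exp (-(S F (r (rep i₀)) * q (rep i₀) ω))) ∂Q :=
          lintegral_congr fun ω => Finset.prod_image
            (f := fun i => ENNReal.ofReal (Real.exp (-(S F (r i) * q i ω)))) hinjOn
      _ = ∫⁻ ω, pE (∑ i₀ : Fin d → Fin M,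
            ENNReal.ofReal (q (rep i₀) ω) * ENNReal.ofReal (S F i₀)) ∂Q :=
          lintegral_congr fun ω => (b1 ω).symm
  have hmeasS : ∀ F : Finset (Fin d → ℤ), Measurable (fun ω =>
      pE (∑ i₀ : Fin d → Fin M,
        ENNReal.ofReal (q (rep i₀) ω) * ENNReal.ofReal (S F i₀))) := by
    intro F
    apply pE_measurable.comp
    exact Finset.measurable_sum _ fun i₀ _ =>
      (ENNReal.measurable_ofReal.comp (hmeas (rep i₀))).mul measurable_const
  have hlim : ∀ ω, Tendsto (fun F : Finset (Fin d → ℤ) =>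
      pE (∑ i₀ : Fin d → Fin M,
        ENNReal.ofReal (q (rep i₀) ω) * ENNReal.ofReal (S F i₀)))
      atTop (𝓝 (pE (∑ i₀ : Fin d → Fin M,
        ENNReal.ofReal (q (rep i₀) ω) * A i₀))) := by
    intro ω
    apply (pE_continuous.tendsto _).comp
    apply tendsto_finset_sum
    intro i₀ _
    have h2 : (fun F : Finset (Fin d → ℤ) => ENNReal.ofReal (S F i₀)) =
        fun F => ∑ i ∈ F, cls i₀ i := funext fun F => hSsum F i₀
    have h1 : Tendsto (fun F : Finset (Fin d → ℤ) => ENNReal.ofReal (S F i₀)) atTop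
        (𝓝 (A i₀)) := by
      rw [h2]
      exact ENNReal.summable.hasSum
    exact ENNReal.Tendsto.const_mul h1 (Or.inr ENNReal.ofReal_ne_top)
  have hDCT : Tendsto (fun F : Finset (Fin d → ℤ) =>
      ∫⁻ ω, pE (∑ i₀ : Fin d → Fin M,
        ENNReal.ofReal (q (rep i₀) ω) * ENNReal.ofReal (S F i₀)) ∂Q) atTop
      (𝓝 (∫⁻ ω, pE (∑ i₀ : Fin d → Fin M,
        ENNReal.ofReal (q (rep i₀) ω) * A i₀) ∂Q)) := by
    refine tendsto_lintegral_filter_of_dominated_convergence (fun _ => 1)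
      (Eventually.of_forall hmeasS)
      (Eventually.of_forall fun F => ae_of_all _ fun ω => pE_le_one _) ?_
      (ae_of_all _ hlim)
    simp
  haveI : (atTop : Filter (Finset (Fin d → ℤ))).NeBot := Filter.atTop_neBot
  have hfinal : (∫⁻ ω, ENNReal.ofReal
        (negExp (∑' i : Fin d → ℤ, ENNReal.ofReal (a i * q i ω))) ∂Q) ≤
      ∫⁻ ω, pE (∑ i₀ : Fin d → Fin M,
        ENNReal.ofReal (q (rep i₀) ω) * A i₀) ∂Q :=
    ge_of_tendsto' hDCT fun F => (stepA F).trans_eq (stepB F)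
  refine hfinal.trans_eq (lintegral_congr fun ω => ?_)
  show pE (∑ i₀ : Fin d → Fin M, ENNReal.ofReal (q (rep i₀) ω) * A i₀) =
    pE (∑ i₀ : Fin d → Fin M, ENNReal.ofReal (q (rep i₀) ω) *
      ∑' j : Fin d → ℤ, ENNReal.ofReal (a (fun k => ((i₀ k : ℕ) : ℤ) + (M : ℤ) * j k)))
  exact congrArg pE (Finset.sum_congr rfl fun i₀ _ => by rw [htsum i₀])

end
end

section
/- Let n ≥ 1, let q_1, …, q_n be independent, identically distributed, nonnegative random variables, and let a_1, …, a_n be nonnegative real numbers. Then E[ exp( −(a_1 q_1 + ⋯ + a_n q_n) ) ] ≤ E[ exp( −(a_1 + ⋯ + a_n) q_1 ) ]. -/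
open MeasureTheory ProbabilityTheory

private lemma int_exp_aux {Ω : Type*} [MeasurableSpace Ω] (Q : Measure Ω) [IsProbabilityMeasure Q]
    (X : Ω → ℝ) (hX : Measurable X) (hX0 : ∀ ω, 0 ≤ X ω) {c : ℝ} (hc : 0 ≤ c) :
    Integrable (fun ω => Real.exp (-c * X ω)) Q := by
  refine Integrable.mono' (integrable_const 1)
    ((hX.const_mul (-c)).exp.aestronglyMeasurable) ?_
  filter_upwards with ω
  rw [Real.norm_eq_abs, abs_of_pos (Real.exp_pos _), Real.exp_le_one_iff]
  have := mul_nonneg hc (hX0 ω); linarith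

private lemma chebyshev_pair {Ω : Type*} [MeasurableSpace Ω] (Q : Measure Ω)
    [IsProbabilityMeasure Q]
    (X : Ω → ℝ) (hX : Measurable X) (hX0 : ∀ ω, 0 ≤ X ω) {a b : ℝ} (ha : 0 ≤ a) (hb : 0 ≤ b) :
    (∫ ω, Real.exp (-a * X ω) ∂Q) * (∫ ω, Real.exp (-b * X ω) ∂Q) ≤
      ∫ ω, Real.exp (-(a + b) * X ω) ∂Q := by
  set f : Ω → ℝ := fun ω => Real.exp (-a * X ω) with hf
  set g : Ω → ℝ := fun ω => Real.exp (-b * X ω) with hg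
  have hfm : Measurable f := (hX.const_mul (-a)).exp
  have hgm : Measurable g := (hX.const_mul (-b)).exp
  have hfi : Integrable f Q := int_exp_aux Q X hX hX0 ha
  have hgi : Integrable g Q := int_exp_aux Q X hX hX0 hb
  have hfgq : ∀ ω, f ω * g ω = Real.exp (-(a + b) * X ω) := by
    intro ω; rw [hf, hg, ← Real.exp_add]; ring_nf
  have hfgi : Integrable (fun ω => f ω * g ω) Q := by
    simp only [hfgq]; exact int_exp_aux Q X hX hX0 (by linarith)
  set P := Q.prod Q with hP
  have h1 : Integrable (fun p : Ω × Ω => f p.1 * g p.2) P := hfi.mul_prod hgi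
  have h2 : Integrable (fun p : Ω × Ω => f p.2 * g p.1) P :=
    (hgi.mul_prod hfi).congr (Filter.Eventually.of_forall fun p => mul_comm _ _)
  have h3 : Integrable (fun p : Ω × Ω => f p.1 * g p.1) P :=
    (hfgi.mul_prod (integrable_const (1:ℝ))).congr
      (Filter.Eventually.of_forall fun p => mul_one _)
  have h4 : Integrable (fun p : Ω × Ω => f p.2 * g p.2) P :=
    ((integrable_const (1:ℝ)).mul_prod hfgi).congr
      (Filter.Eventually.of_forall fun p => one_mul _)
  have key : 0 ≤ ∫ p : Ω × Ω, (f p.1 - f p.2) * (g p.1 - g p.2) ∂P := by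
    refine integral_nonneg fun p => ?_
    rcases le_total (X p.1) (X p.2) with h | h
    · refine mul_nonneg (sub_nonneg.2 ?_) (sub_nonneg.2 ?_) <;>
        exact Real.exp_le_exp.2 (by nlinarith)
    · rw [← neg_mul_neg]
      refine mul_nonneg (neg_nonneg.2 (sub_nonpos.2 ?_)) (neg_nonneg.2 (sub_nonpos.2 ?_)) <;>
        exact Real.exp_le_exp.2 (by nlinarith)
  have expand : ∫ p : Ω × Ω, (f p.1 - f p.2) * (g p.1 - g p.2) ∂P =
      (∫ p : Ω × Ω, f p.1 * g p.1 ∂P + ∫ p : Ω × Ω, f p.2 * g p.2 ∂P) -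
      (∫ p : Ω × Ω, f p.1 * g p.2 ∂P + ∫ p : Ω × Ω, f p.2 * g p.1 ∂P) := by
    have hpt : (fun p : Ω × Ω => (f p.1 - f p.2) * (g p.1 - g p.2)) =
        fun p : Ω × Ω => (f p.1 * g p.1 + f p.2 * g p.2) - (f p.1 * g p.2 + f p.2 * g p.1) := by
      funext p; ring
    have hL : Integrable (fun p : Ω × Ω => f p.1 * g p.1 + f p.2 * g p.2) P := h3.add h4
    have hR : Integrable (fun p : Ω × Ω => f p.1 * g p.2 + f p.2 * g p.1) P := h1.add h2
    rw [hpt, integral_sub hL hR, integral_add h3 h4, integral_add h1 h2]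
  have e1 : ∫ p : Ω × Ω, f p.1 * g p.1 ∂P = ∫ ω, f ω * g ω ∂Q := by
    have := integral_prod_mul (μ := Q) (ν := Q) (fun ω => f ω * g ω) (fun _ => (1:ℝ))
    simpa using this
  have e2 : ∫ p : Ω × Ω, f p.2 * g p.2 ∂P = ∫ ω, f ω * g ω ∂Q := by
    have := integral_prod_mul (μ := Q) (ν := Q) (fun _ => (1:ℝ)) (fun ω => f ω * g ω)
    simpa using this
  have e3 : ∫ p : Ω × Ω, f p.1 * g p.2 ∂P = (∫ ω, f ω ∂Q) * ∫ ω, g ω ∂Q :=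
    integral_prod_mul f g
  have e4 : ∫ p : Ω × Ω, f p.2 * g p.1 ∂P = (∫ ω, f ω ∂Q) * ∫ ω, g ω ∂Q := by
    have := integral_prod_mul (μ := Q) (ν := Q) g f
    rw [show (fun p : Ω × Ω => f p.2 * g p.1) = fun p : Ω × Ω => g p.1 * f p.2 by
      funext p; ring, this]; ring
  rw [expand, e1, e2, e3, e4] at key
  have : ∫ ω, f ω * g ω ∂Q = ∫ ω, Real.exp (-(a + b) * X ω) ∂Q := by
    congr 1; funext ω; exact hfgq ω
  rw [this] at key; linarith

/-- For i.i.d. nonnegative random variables `q_1, …, q_n` and nonnegative reals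
`a_1, …, a_n`, `E[exp(-(a_1 q_1 + ⋯ + a_n q_n))] ≤ E[exp(-(a_1 + ⋯ + a_n) q_1)]`. -/
theorem exp_sum_iid_le (n : ℕ) (hn : 1 ≤ n)
    {Ω : Type*} [MeasurableSpace Ω] (Q : Measure Ω) [IsProbabilityMeasure Q]
    (a : Fin n → ℝ) (ha : ∀ i, 0 ≤ a i)
    (q : Fin n → Ω → ℝ) (hmeas : ∀ i, Measurable (q i))
    (hnonneg : ∀ i ω, 0 ≤ q i ω)
    (hindep : iIndepFun q Q)
    (hident : ∀ i j, IdentDistrib (q i) (q j) Q Q) :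
    ∫ ω, Real.exp (-(∑ i, a i * q i ω)) ∂Q ≤
      ∫ ω, Real.exp (-(∑ i, a i) * q ⟨0, hn⟩ ω) ∂Q := by
  set q0 : Ω → ℝ := q ⟨0, hn⟩ with hq0
  set g : Fin n → Ω → ℝ := fun i ω => Real.exp (-(a i) * q i ω) with hgdef
  have hgm : ∀ i, Measurable (g i) := fun i => ((hmeas i).const_mul (-(a i))).exp
  have hgi : ∀ i, Integrable (g i) Q := fun i => int_exp_aux Q (q i) (hmeas i) (hnonneg i) (ha i)
  have hgindep : iIndepFun g Q := by
    have := hindep.comp (fun i => fun x : ℝ => Real.exp (-(a i) * x))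
      (fun i => (measurable_id.const_mul (-(a i))).exp)
    exact this
  -- step A: product splits
  have stepA : ∀ s : Finset (Fin n),
      ∫ ω, ∏ i ∈ s, g i ω ∂Q = ∏ i ∈ s, ∫ ω, g i ω ∂Q := by
    intro s
    classical
    refine Finset.induction_on s ?_ ?_
    · simp
    · intro j s' hi ih
      have hindepfs : IndepFun (∏ i ∈ s', g i) (g j) Q :=
        hgindep.indepFun_finsetProd_of_notMem hgm hi
      have hprodint : Integrable (fun ω => ∏ i ∈ s', g i ω) Q := by
        refine Integrable.mono' (integrable_const 1)
          ((Finset.measurable_prod s' (fun i _ => hgm i)).aestronglyMeasurable) ?_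
        filter_upwards with ω
        rw [Real.norm_eq_abs, abs_of_nonneg (Finset.prod_nonneg fun i _ => (Real.exp_pos _).le)]
        refine Finset.prod_le_one (fun i _ => (Real.exp_pos _).le) fun i _ => ?_
        rw [Real.exp_le_one_iff]
        have := mul_nonneg (ha i) (hnonneg i ω); linarith
      have hprodint' : Integrable (∏ i ∈ s', g i) Q :=
        hprodint.congr (Filter.Eventually.of_forall fun ω => by simp)
      have h := hindepfs.symm.integral_mul_eq_mul_integral (hgi j).aestronglyMeasurable hprodint'.aestronglyMeasurable
      simp only [Finset.prod_insert hi]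
      calc ∫ ω, g j ω * ∏ i ∈ s', g i ω ∂Q
          = ∫ ω, (g j * ∏ i ∈ s', g i) ω ∂Q := by
            congr 1; funext ω; simp
        _ = (∫ ω, g j ω ∂Q) * ∫ ω, (∏ i ∈ s', g i) ω ∂Q := h
        _ = (∫ ω, g j ω ∂Q) * ∫ ω, ∏ i ∈ s', g i ω ∂Q := by
            congr 1; apply integral_congr_ae; filter_upwards with ω; simp
        _ = (∫ ω, g j ω ∂Q) * ∏ i ∈ s', ∫ ω, g i ω ∂Q := by rw [ih]
  -- step B: identical distribution
  have stepB : ∀ i, ∫ ω, g i ω ∂Q = ∫ ω, Real.exp (-(a i) * q0 ω) ∂Q := by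
    intro i
    have hid : IdentDistrib (q i) q0 Q Q := hident i ⟨0, hn⟩
    exact (hid.comp (u := fun x : ℝ => Real.exp (-(a i) * x))
      ((measurable_id.const_mul (-(a i))).exp)).integral_eq
  -- step C: Chebyshev over a finset
  have stepC : ∀ s : Finset (Fin n),
      ∏ i ∈ s, ∫ ω, Real.exp (-(a i) * q0 ω) ∂Q ≤
        ∫ ω, Real.exp (-(∑ i ∈ s, a i) * q0 ω) ∂Q := by
    intro s
    classical
    refine Finset.induction_on s ?_ ?_
    · simp
    · intro j s' hi ih
      rw [Finset.prod_insert hi, Finset.sum_insert hi]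
      have hnn : 0 ≤ ∫ ω, Real.exp (-(a j) * q0 ω) ∂Q :=
        integral_nonneg fun ω => (Real.exp_pos _).le
      calc (∫ ω, Real.exp (-(a j) * q0 ω) ∂Q) * ∏ i ∈ s', ∫ ω, Real.exp (-(a i) * q0 ω) ∂Q
          ≤ (∫ ω, Real.exp (-(a j) * q0 ω) ∂Q) * ∫ ω, Real.exp (-(∑ i ∈ s', a i) * q0 ω) ∂Q :=
            mul_le_mul_of_nonneg_left ih hnn
        _ ≤ ∫ ω, Real.exp (-(a j + ∑ i ∈ s', a i) * q0 ω) ∂Q :=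
            chebyshev_pair Q q0 (hmeas _) (hnonneg _) (ha j)
              (Finset.sum_nonneg fun i _ => ha i)
  have lhs_eq : ∫ ω, Real.exp (-(∑ i, a i * q i ω)) ∂Q = ∫ ω, ∏ i, g i ω ∂Q := by
    congr 1; funext ω
    rw [hgdef]
    simp only [← Real.exp_sum]
    congr 1
    rw [← Finset.sum_neg_distrib]
    congr 1; funext i; ring
  calc ∫ ω, Real.exp (-(∑ i, a i * q i ω)) ∂Q
      = ∫ ω, ∏ i, g i ω ∂Q := lhs_eq
    _ = ∏ i, ∫ ω, g i ω ∂Q := stepA Finset.univ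
    _ = ∏ i, ∫ ω, Real.exp (-(a i) * q0 ω) ∂Q := Finset.prod_congr rfl fun i _ => stepB i
    _ ≤ ∫ ω, Real.exp (-(∑ i, a i) * q0 ω) ∂Q := stepC Finset.univ
end

section
/- Let (T, d) be a metric space and m a Borel measure on T with m(T) = 1. Suppose there exist r_0 > 0 and C_d ≥ 1 such that m(B(x,r)) ≤ C_d · m(B(x, r/3)) for every x ∈ T and every 0 < r < r_0. Let x_1, …, x_N ∈ T, let b, ε, δ > 0 and R > 3. Call an index i_0 ∈ {1,…,N} good if for every integer l ≥ 0 with 10 b ε R^l < r_0 one has m( (⋃_{i=1}^N closedBall(x_i, bε)) ∩ B(x_{i_0}, 10 b ε R^l) ) ≥ (δ/C_d) · m( B(x_{i_0}, 10 b ε R^l) ); otherwise call i_0 bad. Then m( ⋃_{i_0 bad} closedBall(x_{i_0}, bε) ) ≤ δ. -/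
open MeasureTheory Metric
open scoped ENNReal

noncomputable section

/-- An obstacle point `x_{i₀}` is good if every ball `B(x_{i₀}, 10 b ε R^l)` with
`10 b ε R^l < r₀` carries at least a fraction `δ/C_d` of obstacle mass. -/
def GoodObstacle {T : Type*} [MetricSpace T] [MeasurableSpace T] (μ : Measure T)
    (r₀ Cd : ℝ) {N : ℕ} (x : Fin N → T) (b ε δ R : ℝ) (i₀ : Fin N) : Prop :=
  ∀ l : ℕ, 10 * b * ε * R ^ l < r₀ →
    ENNReal.ofReal (δ / Cd) * μ (ball (x i₀) (10 * b * ε * R ^ l)) ≤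
      μ ((⋃ i, closedBall (x i) (b * ε)) ∩ ball (x i₀) (10 * b * ε * R ^ l))

/-- Balls centered at bad obstacle points sum up to a set of measure at most `δ`. -/
theorem measure_bad_obstacles_le {T : Type*} [MetricSpace T] [MeasurableSpace T]
    [BorelSpace T] (μ : Measure T) (hμ : μ Set.univ = 1)
    (r₀ : ℝ) (hr₀ : 0 < r₀) (Cd : ℝ) (hCd : 1 ≤ Cd)
    (hdoubling : ∀ (x : T) (r : ℝ), 0 < r → r < r₀ →
      μ (ball x r) ≤ ENNReal.ofReal Cd * μ (ball x (r / 3)))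
    (N : ℕ) (x : Fin N → T) (b ε δ R : ℝ)
    (hb : 0 < b) (hε : 0 < ε) (hδ : 0 < δ) (hR : 3 < R) :
    μ (⋃ i, ⋃ (_ : ¬ GoodObstacle μ r₀ Cd x b ε δ R i), closedBall (x i) (b * ε)) ≤
      ENNReal.ofReal δ := by
  classical
  have hCd0 : (0:ℝ) < Cd := lt_of_lt_of_le one_pos hCd
  have hR0 : (0:ℝ) < R := by linarith
  have hR1 : (1:ℝ) ≤ R := by linarith
  have hbe : 0 < b * ε := mul_pos hb hε
  set Bad : Set (Fin N) := {i | ¬ GoodObstacle μ r₀ Cd x b ε δ R i} with hBadDef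
  have hch : ∀ i ∈ Bad, ∃ l : ℕ, 10 * b * ε * R ^ l < r₀ ∧
      μ ((⋃ j, closedBall (x j) (b * ε)) ∩ ball (x i) (10 * b * ε * R ^ l)) <
        ENNReal.ofReal (δ / Cd) * μ (ball (x i) (10 * b * ε * R ^ l)) := by
    intro i hi
    simp only [hBadDef, Set.mem_setOf_eq, GoodObstacle] at hi
    push_neg at hi
    exact hi
  set l : Fin N → ℕ := fun i => if h : i ∈ Bad then (hch i h).choose else 0 with hldef
  set ρ : Fin N → ℝ := fun i => 10 * b * ε * R ^ (l i) with hρdef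
  have hρpos : ∀ i, 0 < ρ i := fun i => by
    have := pow_pos hR0 (l i); simp only [hρdef]; positivity
  have hρlt : ∀ i ∈ Bad, ρ i < r₀ := by
    intro i hi
    have : l i = (hch i hi).choose := by simp only [hldef, dif_pos hi]
    simp only [hρdef, this]
    exact (hch i hi).choose_spec.1
  have hρbad : ∀ i ∈ Bad,
      μ ((⋃ j, closedBall (x j) (b * ε)) ∩ ball (x i) (ρ i)) <
        ENNReal.ofReal (δ / Cd) * μ (ball (x i) (ρ i)) := by
    intro i hi
    have : l i = (hch i hi).choose := by simp only [hldef, dif_pos hi]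
    simp only [hρdef, this]
    exact (hch i hi).choose_spec.2
  obtain ⟨u, huB, hdisj, hcov⟩ :=
    Vitali.exists_disjoint_subfamily_covering_enlargement
      (fun i => ball (x i) (ρ i / 3)) Bad ρ 2 one_lt_two
      (fun a _ => (hρpos a).le) r₀ (fun a ha => (hρlt a ha).le)
      (fun a _ => nonempty_ball.2 (by linarith [hρpos a]))
  have hkey : ∀ a ∈ Bad, ∃ j ∈ u, closedBall (x a) (b * ε) ⊆ ball (x j) (ρ j) := by
    intro a ha
    obtain ⟨j, hju, hnon, hle⟩ := hcov a ha
    refine ⟨j, hju, ?_⟩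
    have hρa : ρ a ≤ ρ j := by
      by_contra h
      push_neg at h
      have hlj : l j < l a := by
        by_contra h'
        push_neg at h'
        have hp : R ^ (l a) ≤ R ^ (l j) := pow_le_pow_right₀ hR1 h'
        have : ρ a ≤ ρ j := by simp only [hρdef]; nlinarith
        linarith
      have h1 : R ^ (l j + 1) ≤ R ^ (l a) := pow_le_pow_right₀ hR1 hlj
      have hpj : (0:ℝ) < R ^ (l j) := pow_pos hR0 _
      have h2 : ρ j * R ≤ ρ a := by
        simp only [hρdef, pow_succ] at h1 ⊢; nlinarith
      nlinarith [hρpos j]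
    obtain ⟨z, hz1, hz2⟩ := hnon
    have hza : dist z (x a) < ρ a / 3 := mem_ball.1 hz1
    have hzj : dist z (x j) < ρ j / 3 := mem_ball.1 hz2
    have hdist : dist (x a) (x j) < ρ a / 3 + ρ j / 3 := by
      calc dist (x a) (x j) ≤ dist z (x a) + dist z (x j) := dist_triangle_left _ _ _
        _ < ρ a / 3 + ρ j / 3 := by linarith
    have hba : b * ε ≤ ρ a / 3 := by
      have h1 : (1:ℝ) ≤ R ^ (l a) := one_le_pow₀ hR1
      simp only [hρdef]; nlinarith
    intro y hy
    have hy' : dist y (x a) ≤ b * ε := mem_closedBall.1 hy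
    have : dist y (x j) < ρ j := by
      calc dist y (x j) ≤ dist y (x a) + dist (x a) (x j) := dist_triangle _ _ _
        _ < b * ε + (ρ a / 3 + ρ j / 3) := by linarith
        _ ≤ ρ j := by linarith
    exact mem_ball.2 this
  have hsub : (⋃ i, ⋃ (_ : ¬ GoodObstacle μ r₀ Cd x b ε δ R i), closedBall (x i) (b * ε)) ⊆
      ⋃ j ∈ u, ((⋃ i, closedBall (x i) (b * ε)) ∩ ball (x j) (ρ j)) := by
    intro y hy
    simp only [Set.mem_iUnion] at hy
    obtain ⟨i, hi, hyi⟩ := hy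
    obtain ⟨j, hju, hsub⟩ := hkey i hi
    exact Set.mem_biUnion hju ⟨Set.mem_iUnion.2 ⟨i, hyi⟩, hsub hyi⟩
  calc μ (⋃ i, ⋃ (_ : ¬ GoodObstacle μ r₀ Cd x b ε δ R i), closedBall (x i) (b * ε))
      ≤ μ (⋃ j ∈ u, ((⋃ i, closedBall (x i) (b * ε)) ∩ ball (x j) (ρ j))) :=
        measure_mono hsub
    _ ≤ ∑' j : u, μ ((⋃ i, closedBall (x i) (b * ε)) ∩ ball (x j) (ρ j)) :=
        measure_biUnion_le μ u.to_countable _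
    _ ≤ ∑' j : u, ENNReal.ofReal (δ / Cd) * μ (ball (x j) (ρ j)) :=
        ENNReal.tsum_le_tsum fun j => (hρbad j (huB j.2)).le
    _ ≤ ∑' j : u, ENNReal.ofReal (δ / Cd) *
          (ENNReal.ofReal Cd * μ (ball (x j) (ρ j / 3))) :=
        ENNReal.tsum_le_tsum fun j =>
          mul_le_mul_right (hdoubling _ _ (hρpos _) (hρlt _ (huB j.2))) _
    _ = ∑' j : u, ENNReal.ofReal δ * μ (ball (x j) (ρ j / 3)) := by
        congr 1
        funext j
        rw [← mul_assoc, ← ENNReal.ofReal_mul (by positivity),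
          div_mul_cancel₀ _ (ne_of_gt hCd0)]
    _ = ENNReal.ofReal δ * ∑' j : u, μ (ball (x j) (ρ j / 3)) := ENNReal.tsum_mul_left
    _ = ENNReal.ofReal δ * μ (⋃ j ∈ u, ball (x j) (ρ j / 3)) := by
        rw [measure_biUnion u.to_countable hdisj (fun j _ => measurableSet_ball)]
    _ ≤ ENNReal.ofReal δ * 1 :=
        mul_le_mul_right ((measure_mono (Set.subset_univ _)).trans_eq hμ) _
    _ = ENNReal.ofReal δ := mul_one _

end
end

section
/- Let d ≥ 1 be an integer, α ∈ (0,2), m a positive integer, and let φ : ℝ^d → ℝ be measurable and m-periodic. Then ∫_{[0,m)^d} ∫_{ℝ^d} (φ(x) − φ(z))² ν(x − z) dz dx = ∫_{[0,m)^d} ∫_{[0,m)^d} (φ(x) − φ(z))² ν_m(x − z) dz dx, with both sides understood as values in [0,∞]. -/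
open MeasureTheory Metric Set
open scoped ENNReal NNReal

noncomputable section

/-- The constant `A_{d,-α} = Γ((d+α)/2) / (2^{-α} π^{d/2} |Γ(-α/2)|)`. -/
def fracConst (d : ℕ) (α : ℝ) : ℝ :=
  Real.Gamma (((d : ℝ) + α) / 2) /
    ((2 : ℝ) ^ (-α) * Real.pi ^ ((d : ℝ) / 2) * |Real.Gamma (-α / 2)|)

/-- The jump kernel `ν(z) = A_{d,-α} |z|^{-(d+α)}`. -/
def fracKernel (d : ℕ) (α : ℝ) (z : EuclideanSpace ℝ (Fin d)) : ℝ :=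
  fracConst d α * ‖z‖ ^ (-((d : ℝ) + α))

/-- The fractional Dirichlet form `ℰ(f,f)`, with values in `[0,∞]`. -/
def fracEnergy (d : ℕ) (α : ℝ) (f : EuclideanSpace ℝ (Fin d) → ℝ) : ℝ≥0∞ :=
  (1 / 2 : ℝ≥0∞) *
    ∫⁻ x, ∫⁻ y, ENNReal.ofReal ((f x - f y) ^ 2 * fracKernel d α (x - y))

/-- The principal Dirichlet eigenvalue `λ₁(U)` of the fractional Laplacian on `U`. -/
def fracLambda1 (d : ℕ) (α : ℝ) (U : Set (EuclideanSpace ℝ (Fin d))) : ℝ≥0∞ :=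
  sInf { e : ℝ≥0∞ | ∃ f : EuclideanSpace ℝ (Fin d) → ℝ,
    MemLp f 2 volume ∧ (∫ x, (f x) ^ 2) = 1 ∧
    (∀ᵐ x ∂(volume), x ∉ U → f x = 0) ∧ e = fracEnergy d α f }

/-- The point `m·i` of the lattice `mℤ^d`, as an element of `ℝ^d`. -/
def latticeVec (d : ℕ) (m : ℕ) (i : Fin d → ℤ) : EuclideanSpace ℝ (Fin d) :=
  (EuclideanSpace.equiv (Fin d) ℝ).symm fun k => (m : ℝ) * (i k : ℝ)

/-- The fundamental cell `[0,m)^d`. -/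
def box (d : ℕ) (m : ℕ) : Set (EuclideanSpace ℝ (Fin d)) :=
  { x | ∀ k, x k ∈ Set.Ico (0 : ℝ) (m : ℝ) }

/-- A function `f : ℝ^d → ℝ` is `m`-periodic. -/
def IsPeriodic (d : ℕ) (m : ℕ) (f : EuclideanSpace ℝ (Fin d) → ℝ) : Prop :=
  ∀ (x : EuclideanSpace ℝ (Fin d)) (i : Fin d → ℤ), f (x + latticeVec d m i) = f x

/-- The periodized kernel `ν_m(w) = Σ_{i ∈ ℤ^d} ν(w + m·i)`, with values in `[0,∞]`. -/
def perKernel (d : ℕ) (α : ℝ) (m : ℕ) (w : EuclideanSpace ℝ (Fin d)) : ℝ≥0∞ :=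
  ∑' i : Fin d → ℤ, ENNReal.ofReal (fracKernel d α (w + latticeVec d m i))

/-- The Dirichlet form `ℰ^m(f,f)` of the stable process on the torus `𝕋_m`. -/
def torusEnergy (d : ℕ) (α : ℝ) (m : ℕ) (f : EuclideanSpace ℝ (Fin d) → ℝ) : ℝ≥0∞ :=
  (1 / 2 : ℝ≥0∞) * ∫⁻ x in box d m, ∫⁻ y in box d m,
      ENNReal.ofReal ((f x - f y) ^ 2) * perKernel d α m (x - y)

/-- The principal eigenvalue `λ₁^m(U)` on the torus `𝕋_m`. -/
def torusLambda1 (d : ℕ) (α : ℝ) (m : ℕ) (U : Set (EuclideanSpace ℝ (Fin d))) : ℝ≥0∞ :=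
  sInf { e : ℝ≥0∞ | ∃ f : EuclideanSpace ℝ (Fin d) → ℝ,
    Measurable f ∧ IsPeriodic d m f ∧ (∫ x in box d m, (f x) ^ 2) = 1 ∧
    (∀ᵐ x ∂(volume), x ∉ U → f x = 0) ∧ e = torusEnergy d α m f }


lemma fracKernel_meas (d : ℕ) (α : ℝ) : Measurable (fracKernel d α) := by
  unfold fracKernel; fun_prop

lemma latticeVec_apply (d m : ℕ) (i : Fin d → ℤ) (k : Fin d) :
    latticeVec d m i k = (m : ℝ) * (i k : ℝ) := rfl

lemma latticeVec_neg (d m : ℕ) (i : Fin d → ℤ) :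
    latticeVec d m (-i) = -latticeVec d m i := by
  ext k; simp [latticeVec_apply]

lemma box_measurable (d m : ℕ) : MeasurableSet (box d m) := by
  have : box d m = ⋂ k, (fun x : EuclideanSpace ℝ (Fin d) => x k) ⁻¹' Set.Ico (0:ℝ) m := by
    ext x; simp [box]
  rw [this]
  exact MeasurableSet.iInter fun k =>
    measurableSet_Ico.preimage ((EuclideanSpace.proj (𝕜 := ℝ) k).continuous.measurable)

-- the translated cells
lemma cell_disjoint (d m : ℕ) (hm : 0 < m) :
    Pairwise (Function.onFun Disjoint
      (fun i : Fin d → ℤ => (fun z : EuclideanSpace ℝ (Fin d) => z - latticeVec d m i) ⁻¹' box d m)) := by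
  intro i j hij
  simp only [Function.onFun, Set.disjoint_left]
  intro z hi hj
  apply hij
  funext k
  have h1 := hi k
  have h2 := hj k
  simp only [box, Set.mem_setOf_eq] at h1 h2
  have e1 : (z - latticeVec d m i) k = z k - m * i k := rfl
  have e2 : (z - latticeVec d m j) k = z k - m * j k := rfl
  rw [e1] at h1; rw [e2] at h2
  have hmR : (0:ℝ) < m := by exact_mod_cast hm
  have : |(i k : ℝ) - j k| < 1 := by
    rw [abs_sub_lt_iff]
    constructor <;> nlinarith [h1.1, h1.2, h2.1, h2.2, mul_pos hmR hmR]
  have h3 : |i k - j k| < 1 := by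
    have h4 : |((i k - j k : ℤ) : ℝ)| < 1 := by push_cast; exact this
    rw [← Int.cast_abs] at h4
    exact_mod_cast h4
  exact sub_eq_zero.mp (Int.abs_lt_one_iff.mp h3)

lemma cell_cover (d m : ℕ) (hm : 0 < m) :
    (⋃ i : Fin d → ℤ, (fun z : EuclideanSpace ℝ (Fin d) => z - latticeVec d m i) ⁻¹' box d m) = Set.univ := by
  ext z
  simp only [Set.mem_iUnion, Set.mem_univ, iff_true, Set.mem_preimage]
  have hmR : (0:ℝ) < m := by exact_mod_cast hm
  refine ⟨fun k => ⌊z k / m⌋, fun k => ?_⟩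
  have e1 : (z - latticeVec d m fun k => ⌊z k / m⌋) k = z k - m * ⌊z k / m⌋ := rfl
  rw [e1]
  constructor
  · have := Int.sub_floor_div_mul_nonneg (z k) hmR
    linarith [this]
  · have := Int.sub_floor_div_mul_lt (z k) hmR
    linarith [this]

lemma key (d m : ℕ) (hm : 0 < m) (f : EuclideanSpace ℝ (Fin d) → ℝ≥0∞)
    (hf : Measurable f) :
    ∫⁻ z, f z = ∑' i : Fin d → ℤ, ∫⁻ z in box d m, f (z + latticeVec d m i) := by
  have hmeas : ∀ i : Fin d → ℤ, MeasurableSet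
      ((fun z : EuclideanSpace ℝ (Fin d) => z - latticeVec d m i) ⁻¹' box d m) :=
    fun i => (box_measurable d m).preimage
      (measurable_id.sub_const (latticeVec d m i))
  calc ∫⁻ z, f z
      = ∫⁻ z in ⋃ i : Fin d → ℤ,
          (fun z : EuclideanSpace ℝ (Fin d) => z - latticeVec d m i) ⁻¹' box d m, f z := by
        rw [cell_cover d m hm, Measure.restrict_univ]
    _ = ∑' i : Fin d → ℤ, ∫⁻ z in
          (fun z : EuclideanSpace ℝ (Fin d) => z - latticeVec d m i) ⁻¹' box d m, f z :=
        lintegral_iUnion hmeas (cell_disjoint d m hm) f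
    _ = ∑' i : Fin d → ℤ, ∫⁻ z in box d m, f (z + latticeVec d m i) := by
        refine tsum_congr fun i => ?_
        have hmp : MeasurePreserving (fun z : EuclideanSpace ℝ (Fin d) => z + latticeVec d m i)
            volume volume := measurePreserving_add_right volume (latticeVec d m i)
        have := hmp.setLIntegral_comp_preimage (s := (fun z : EuclideanSpace ℝ (Fin d) => z - latticeVec d m i) ⁻¹' box d m) (hmeas i) hf
        have hset : (fun z : EuclideanSpace ℝ (Fin d) => z + latticeVec d m i) ⁻¹'
            ((fun z : EuclideanSpace ℝ (Fin d) => z - latticeVec d m i) ⁻¹' box d m) = box d m := by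
          ext z; simp
        rw [hset] at this
        exact this.symm



/-- For an `m`-periodic `φ`, integrating the jump kernel over all of `ℝ^d`
equals integrating the periodized kernel over the fundamental cell. -/
theorem periodization_of_energy (d : ℕ) (hd : 1 ≤ d) (α : ℝ)
    (hα : α ∈ Set.Ioo (0 : ℝ) 2) (m : ℕ) (hm : 0 < m)
    (φ : EuclideanSpace ℝ (Fin d) → ℝ) (hφmeas : Measurable φ)
    (hφper : IsPeriodic d m φ) :
    (∫⁻ x in box d m, ∫⁻ z, ENNReal.ofReal ((φ x - φ z) ^ 2 * fracKernel d α (x - z))) =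
      ∫⁻ x in box d m, ∫⁻ z in box d m,
        ENNReal.ofReal ((φ x - φ z) ^ 2) * perKernel d α m (x - z) := by
  refine lintegral_congr fun x => ?_
  have hfm : Measurable fun z : EuclideanSpace ℝ (Fin d) =>
      ENNReal.ofReal ((φ x - φ z) ^ 2 * fracKernel d α (x - z)) := by
    apply Measurable.ennreal_ofReal
    exact (((measurable_const.sub hφmeas).pow_const 2).mul
      ((fracKernel_meas d α).comp (measurable_const.sub measurable_id)))
  rw [key d m hm _ hfm]
  rw [← lintegral_tsum]
  · refine setLIntegral_congr_fun (box_measurable d m) (fun z _ => ?_)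
    have step : ∀ i : Fin d → ℤ,
        ENNReal.ofReal ((φ x - φ (z + latticeVec d m i)) ^ 2 *
            fracKernel d α (x - (z + latticeVec d m i))) =
          ENNReal.ofReal ((φ x - φ z) ^ 2) *
            ENNReal.ofReal (fracKernel d α ((x - z) + latticeVec d m (-i))) := by
      intro i
      rw [hφper z i, ENNReal.ofReal_mul (sq_nonneg _)]
      congr 2
      rw [latticeVec_neg]
      abel
    simp_rw [step]
    rw [ENNReal.tsum_mul_left]
    congr 1
    exact (Equiv.neg (Fin d → ℤ)).tsum_eq fun i =>
      ENNReal.ofReal (fracKernel d α ((x - z) + latticeVec d m i))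
  · intro i
    apply Measurable.aemeasurable
    exact hfm.comp (measurable_id.add_const (latticeVec d m i))

end
end

section
/- Let d ≥ 1 and m ≥ 4 be integers, and let φ : ℝ^d → ℝ be measurable, m-periodic, with ∫_{[0,m)^d} φ² = 1. Then there exists y_0 ∈ [0,m)^d such that ∫_{[0,m)^d} φ(x)² · 1_{[√m, m−√m]^d}( (x − y_0) mod m ) dx ≥ 1 − 2d/√m, where (x − y_0) mod m denotes the unique representative of x − y_0 modulo mℤ^d lying in [0,m)^d. -/
open MeasureTheory
open scoped ENNReal

noncomputable section

/-- The 1-periodic-modulated inner interval condition, as a subset of `ℝ`. -/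
def gS (m : ℕ) : Set ℝ :=
  {t : ℝ | (m:ℝ) * Int.fract (t / m) ∈ Set.Icc (Real.sqrt m) ((m:ℝ) - Real.sqrt m)}

/-- Indicator of `gS m`. -/
def g (m : ℕ) : ℝ → ℝ := (gS m).indicator 1

lemma gS_meas (m : ℕ) : MeasurableSet (gS m) :=
  ((measurable_const.mul ((measurable_id.div_const _).fract)).comp measurable_id)
    measurableSet_Icc

lemma g_meas (m : ℕ) : Measurable (g m) :=
  (measurable_const.indicator (gS_meas m))

lemma g_nonneg (m : ℕ) (t : ℝ) : 0 ≤ g m t := Set.indicator_nonneg (by simp) t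

lemma g_le_one (m : ℕ) (t : ℝ) : g m t ≤ 1 := by
  unfold g; by_cases h : t ∈ gS m <;> simp [h]

lemma g_periodic (m : ℕ) (hm : (0:ℝ) < m) : Function.Periodic (g m) m := by
  intro t
  have h1 : (t + m) / m = t / m + 1 := by field_simp
  have hmem : t + m ∈ gS m ↔ t ∈ gS m := by simp [gS, h1, Int.fract_add_one]
  unfold g
  by_cases h : t ∈ gS m
  · rw [Set.indicator_of_mem (hmem.mpr h), Set.indicator_of_mem h]; rfl
  · rw [Set.indicator_of_notMem (fun hc => h (hmem.mp hc)), Set.indicator_of_notMem h]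

lemma g_integral (m : ℕ) (hm : 4 ≤ m) (t : ℝ) :
    ∫ y in Set.Ico (0:ℝ) m, g m (t - y) = (m:ℝ) - 2 * Real.sqrt m := by
  have hm0 : (0:ℝ) < m := by positivity
  have hs2 : (2:ℝ) ≤ Real.sqrt m := by
    rw [show (2:ℝ) = Real.sqrt 4 by
      rw [show (4:ℝ) = 2^2 by norm_num, Real.sqrt_sq (by norm_num)]]
    exact Real.sqrt_le_sqrt (by exact_mod_cast hm)
  have hs0 : (0:ℝ) < Real.sqrt m := lt_of_lt_of_le (by norm_num) hs2
  have hsm : Real.sqrt m * Real.sqrt m = m := Real.mul_self_sqrt hm0.le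
  have h2s : 2 * Real.sqrt m ≤ m := by nlinarith
  rw [integral_Ico_eq_integral_Ioo, ← integral_Ioc_eq_integral_Ioo,
    ← intervalIntegral.integral_of_le hm0.le]
  rw [intervalIntegral.integral_comp_sub_left (g m) t]
  have hper : ∫ x in (t - m)..(t - 0), g m x = ∫ x in (0:ℝ)..m, g m x := by
    have := (g_periodic m hm0).intervalIntegral_add_eq (t - m) 0
    simpa [sub_add_cancel] using this
  rw [hper, intervalIntegral.integral_of_le hm0.le]
  have hset : gS m ∩ Set.Ioc (0:ℝ) m = Set.Icc (Real.sqrt m) ((m:ℝ) - Real.sqrt m) := by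
    ext u
    simp only [gS, Set.mem_inter_iff, Set.mem_setOf_eq, Set.mem_Icc, Set.mem_Ioc]
    constructor
    · rintro ⟨⟨h1, h2⟩, h3, h4⟩
      rcases eq_or_lt_of_le h4 with rfl | h4'
      · exfalso
        rw [div_self hm0.ne'] at h1 h2
        simp [Int.fract_one] at h1
        linarith
      · have hfr : Int.fract (u / m) = u / m :=
          Int.fract_eq_self.mpr ⟨by positivity, by rw [div_lt_one hm0]; exact h4'⟩
        rw [hfr, mul_div_cancel₀ _ hm0.ne'] at h1 h2
        exact ⟨h1, h2⟩
    · rintro ⟨h1, h2⟩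
      have hu0 : 0 < u := lt_of_lt_of_le hs0 h1
      have hum : u < m := lt_of_le_of_lt h2 (by linarith)
      have hfr : Int.fract (u / m) = u / m :=
        Int.fract_eq_self.mpr ⟨by positivity, by rw [div_lt_one hm0]; exact hum⟩
      rw [hfr, mul_div_cancel₀ _ hm0.ne']
      exact ⟨⟨h1, h2⟩, hu0, hum.le⟩
  rw [show (g m) = (gS m).indicator 1 from rfl, setIntegral_indicator (gS_meas m)]
  rw [Set.inter_comm, hset]
  simp [Real.volume_Icc]
  rw [max_eq_left (by linarith)]
  ring

lemma g_intInt (m : ℕ) (a b : ℝ) : IntervalIntegrable (g m) volume a b := by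
  apply IntervalIntegrable.mono_fun' (g := fun _ => (1:ℝ)) intervalIntegrable_const
  · exact (g_meas m).aestronglyMeasurable
  · filter_upwards with x
    rw [Real.norm_eq_abs, abs_of_nonneg (g_nonneg m x)]
    exact g_le_one m x

lemma indicator_pi_prod {d : ℕ} (s : Fin d → Set ℝ) (f : Fin d → ℝ → ℝ) (z : Fin d → ℝ) :
    (Set.pi Set.univ s).indicator (fun w => ∏ k, f k (w k)) z
      = ∏ k, ((s k).indicator (f k)) (z k) := by
  by_cases h : z ∈ Set.pi Set.univ s
  · rw [Set.indicator_of_mem h]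
    exact Finset.prod_congr rfl fun k _ =>
      (Set.indicator_of_mem (h k (Set.mem_univ k)) _).symm
  · rw [Set.indicator_of_notMem h]
    rw [Set.mem_univ_pi] at h
    push_neg at h
    obtain ⟨k, hk⟩ := h
    exact (Finset.prod_eq_zero (Finset.mem_univ k)
      (Set.indicator_of_notMem hk _)).symm

/-- There is a center `y₀ ∈ [0,m)^d` such that the mass of `φ²` carried by the
translated inner box `[√m, m-√m]^d` (mod `m`) is at least `1 - 2d/√m`. -/
theorem exists_center_inner_box_mass (d m : ℕ) (hd : 1 ≤ d) (hm : 4 ≤ m)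
    (φ : EuclideanSpace ℝ (Fin d) → ℝ) (hφmeas : Measurable φ)
    (hφper : IsPeriodic d m φ)
    (hφnorm : (∫ x in box d m, (φ x) ^ 2) = 1) :
    ∃ y₀ ∈ box d m,
      1 - 2 * d / Real.sqrt m ≤
        ∫ x in box d m, (φ x) ^ 2 *
          Set.indicator
            { w : EuclideanSpace ℝ (Fin d) | ∀ k,
                Real.sqrt m ≤ (m : ℝ) * Int.fract ((w k - y₀ k) / m) ∧
                (m : ℝ) * Int.fract ((w k - y₀ k) / m) ≤ m - Real.sqrt m }
            (fun _ => (1 : ℝ)) x := by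
  classical
  have hm0 : (0:ℝ) < m := by positivity
  set s : ℝ := Real.sqrt m with hsdef
  have hs2 : (2:ℝ) ≤ s := by
    rw [hsdef, show (2:ℝ) = Real.sqrt 4 by
      rw [show (4:ℝ) = 2^2 by norm_num, Real.sqrt_sq (by norm_num)]]
    exact Real.sqrt_le_sqrt (by exact_mod_cast hm)
  have hs0 : (0:ℝ) < s := lt_of_lt_of_le (by norm_num) hs2
  have hsm : s * s = m := Real.mul_self_sqrt hm0.le
  have h2s : 2 * s ≤ m := by nlinarith
  set e := (MeasurableEquiv.toLp 2 (Fin d → ℝ)).symm with he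
  set piset : Set (Fin d → ℝ) := Set.pi Set.univ fun _ => Set.Ico (0:ℝ) m with hpiset
  have hpimeas : MeasurableSet piset := MeasurableSet.univ_pi fun _ => measurableSet_Ico
  have hbox_pre : box d m = e ⁻¹' piset := by
    ext x
    simp [box, hpiset, Set.mem_univ_pi, he]
  have hboxmeas : MeasurableSet (box d m) := by
    rw [hbox_pre]; exact e.measurable hpimeas
  have hvolpi : volume piset = ENNReal.ofReal m ^ d := by
    rw [hpiset, volume_pi, Measure.pi_pi]
    simp [Real.volume_Ico]
  have hvol : volume (box d m) = ENNReal.ofReal m ^ d := by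
    rw [hbox_pre,
      (EuclideanSpace.volume_preserving_symm_measurableEquiv_toLp (Fin d)).measure_preimage
        hpimeas.nullMeasurableSet, hvolpi]
  have hvol0 : volume (box d m) ≠ 0 := by
    rw [hvol]
    simp only [ne_eq, pow_eq_zero_iff', ENNReal.ofReal_eq_zero, not_and_or, not_le]
    left; exact hm0
  have hvolT : volume (box d m) ≠ ⊤ := by
    rw [hvol]
    exact ENNReal.pow_ne_top ENNReal.ofReal_ne_top
  -- transfer of set integrals to the pi space
  have htransfer : ∀ F : EuclideanSpace ℝ (Fin d) → ℝ,
      ∫ x in box d m, F x = ∫ z in piset, F (e.symm z) := by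
    intro F
    rw [hbox_pre,
      ← MeasurePreserving.setIntegral_preimage_emb
        (EuclideanSpace.volume_preserving_symm_measurableEquiv_toLp (Fin d))
        ((MeasurableEquiv.toLp 2 (Fin d → ℝ)).symm).measurableEmbedding
        (fun z => F (((MeasurableEquiv.toLp 2 (Fin d → ℝ)).symm).symm z)) piset]
    simp [he]
  -- the statement's indicator is a product of 1D indicators
  have hind : ∀ (y x : EuclideanSpace ℝ (Fin d)),
      Set.indicator
          { w : EuclideanSpace ℝ (Fin d) | ∀ k,
              Real.sqrt m ≤ (m : ℝ) * Int.fract ((w k - y k) / m) ∧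
              (m : ℝ) * Int.fract ((w k - y k) / m) ≤ m - Real.sqrt m }
          (fun _ => (1 : ℝ)) x = ∏ k, g m (x k - y k) := by
    intro y x
    by_cases h : ∀ k : Fin d,
        Real.sqrt m ≤ (m : ℝ) * Int.fract ((x k - y k) / m) ∧
        (m : ℝ) * Int.fract ((x k - y k) / m) ≤ m - Real.sqrt m
    · have hx : x ∈ { w : EuclideanSpace ℝ (Fin d) | ∀ k,
          Real.sqrt m ≤ (m : ℝ) * Int.fract ((w k - y k) / m) ∧
          (m : ℝ) * Int.fract ((w k - y k) / m) ≤ m - Real.sqrt m } := h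
      rw [Set.indicator_of_mem hx]
      symm
      apply Finset.prod_eq_one
      intro k _
      have hk : (x k - y k) ∈ gS m := h k
      rw [g, Set.indicator_of_mem hk]
      rfl
    · have hx : x ∉ { w : EuclideanSpace ℝ (Fin d) | ∀ k,
          Real.sqrt m ≤ (m : ℝ) * Int.fract ((w k - y k) / m) ∧
          (m : ℝ) * Int.fract ((w k - y k) / m) ≤ m - Real.sqrt m } := h
      rw [Set.indicator_of_notMem hx]
      push_neg at h
      obtain ⟨k, hk⟩ := h
      symm
      refine Finset.prod_eq_zero (Finset.mem_univ k) ?_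
      rw [g]
      apply Set.indicator_of_notMem
      intro hc
      exact absurd hc.2 (not_le.mpr (hk hc.1))
  -- φ² is integrable on the box
  have hInt : IntegrableOn (fun x => φ x ^ 2) (box d m) := by
    by_contra h
    rw [integral_undef h] at hφnorm
    norm_num at hφnorm
  -- the inner integral over y
  have hinner : ∀ x : EuclideanSpace ℝ (Fin d),
      ∫ y in box d m, ∏ k, g m (x k - y k) = ((m:ℝ) - 2 * s) ^ d := by
    intro x
    rw [htransfer]
    have hcoord : ∀ (z : Fin d → ℝ) (k : Fin d), (e.symm z) k = z k := fun _ _ => rfl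
    simp_rw [hcoord]
    rw [← integral_indicator hpimeas]
    have : (fun z : Fin d → ℝ => piset.indicator (fun w => ∏ k, g m (x k - w k)) z)
        = fun z => ∏ k, ((Set.Ico (0:ℝ) m).indicator (fun t => g m (x k - t))) (z k) := by
      funext z
      exact indicator_pi_prod (fun _ => Set.Ico (0:ℝ) m) (fun k t => g m (x k - t)) z
    rw [this]
    rw [volume_pi, MeasureTheory.integral_fintype_prod_eq_prod (ι := Fin d)
      (f := fun k t => ((Set.Ico (0:ℝ) m).indicator (fun t => g m (x k - t))) t)]
    have : ∀ k : Fin d, (∫ t : ℝ, ((Set.Ico (0:ℝ) m).indicator (fun t => g m (x k - t))) t)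
        = (m:ℝ) - 2 * s := by
      intro k
      rw [integral_indicator measurableSet_Ico]
      exact g_integral m hm (x k)
    rw [Finset.prod_congr rfl fun k _ => this k, Finset.prod_const, Finset.card_univ,
      Fintype.card_fin]
  -- Fubini setup
  set μb := volume.restrict (box d m) with hμb
  haveI : IsFiniteMeasure μb := ⟨by
    rw [hμb, Measure.restrict_apply_univ]
    exact lt_of_le_of_ne le_top hvolT⟩
  set F : EuclideanSpace ℝ (Fin d) × EuclideanSpace ℝ (Fin d) → ℝ :=
    fun p => φ p.1 ^ 2 * ∏ k, g m (p.1 k - p.2 k) with hF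
  have hprod01 : ∀ p : EuclideanSpace ℝ (Fin d) × EuclideanSpace ℝ (Fin d),
      0 ≤ (∏ k, g m (p.1 k - p.2 k)) ∧ (∏ k, g m (p.1 k - p.2 k)) ≤ 1 := by
    intro p
    constructor
    · exact Finset.prod_nonneg fun k _ => g_nonneg m _
    · exact Finset.prod_le_one (fun k _ => g_nonneg m _) (fun k _ => g_le_one m _)
  have hFmeas : Measurable F := by
    apply Measurable.mul
    · exact (hφmeas.comp measurable_fst).pow_const 2
    · apply Finset.measurable_prod
      intro k _
      exact (g_meas m).comp
        (by fun_prop)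
  have hφ2prod : Integrable (fun p : EuclideanSpace ℝ (Fin d) × EuclideanSpace ℝ (Fin d) =>
      φ p.1 ^ 2) (μb.prod μb) := by
    have := Integrable.mul_prod (μ := μb) (ν := μb) hInt (integrable_const (1:ℝ))
    simpa using this
  have hFint : Integrable F (μb.prod μb) := by
    apply Integrable.mono' hφ2prod hFmeas.aestronglyMeasurable
    filter_upwards with p
    rw [hF, Real.norm_eq_abs, abs_mul, abs_of_nonneg (sq_nonneg _),
      abs_of_nonneg (hprod01 p).1]
    calc φ p.1 ^ 2 * (∏ k, g m (p.1 k - p.2 k)) ≤ φ p.1 ^ 2 * 1 :=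
          mul_le_mul_of_nonneg_left (hprod01 p).2 (sq_nonneg _)
      _ = φ p.1 ^ 2 := mul_one _
  -- the total integral via Fubini
  have hkey : ∫ y in box d m, (∫ x in box d m, F (x, y)) = ((m:ℝ) - 2 * s) ^ d := by
    have hswap := MeasureTheory.integral_integral_swap
      (f := fun x y => F (x, y)) (μ := μb) (ν := μb) (by exact hFint)
    rw [show (∫ y in box d m, (∫ x in box d m, F (x, y)))
        = ∫ y, (∫ x, F (x, y) ∂μb) ∂μb from rfl, ← hswap]
    have : ∀ x : EuclideanSpace ℝ (Fin d), (∫ y, F (x, y) ∂μb) = φ x ^ 2 * ((m:ℝ) - 2*s)^d := by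
      intro x
      rw [hF]
      simp only
      rw [integral_const_mul]
      congr 1
      exact hinner x
    rw [integral_congr_ae (Filter.Eventually.of_forall this), integral_mul_const, hφnorm, one_mul]
  have hIint : IntegrableOn (fun y => ∫ x in box d m, F (x, y)) (box d m) :=
    hFint.integral_prod_right
  obtain ⟨y₀, hy₀, havg⟩ := exists_setAverage_le hvol0 hvolT hIint
  refine ⟨y₀, hy₀, ?_⟩
  have hstmt : (∫ x in box d m, (φ x) ^ 2 *
      Set.indicator
        { w : EuclideanSpace ℝ (Fin d) | ∀ k,
            Real.sqrt m ≤ (m : ℝ) * Int.fract ((w k - y₀ k) / m) ∧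
            (m : ℝ) * Int.fract ((w k - y₀ k) / m) ≤ m - Real.sqrt m }
        (fun _ => (1 : ℝ)) x) = ∫ x in box d m, F (x, y₀) := by
    apply integral_congr_ae
    filter_upwards with x
    rw [hF, hind y₀ x]
  rw [hstmt]
  refine le_trans ?_ havg
  rw [setAverage_eq, hkey, measureReal_def, hvol]
  have htor : ((ENNReal.ofReal (m:ℝ)) ^ d).toReal = (m:ℝ) ^ d := by
    rw [ENNReal.toReal_pow, ENNReal.toReal_ofReal hm0.le]
  rw [htor, smul_eq_mul]
  have heq : ((m:ℝ) ^ d)⁻¹ * ((m:ℝ) - 2 * s) ^ d = (1 - 2 / s) ^ d := by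
    have hms : (m:ℝ) - 2 * s = (1 - 2 / s) * m := by
      rw [← hsm]; field_simp
    rw [hms, mul_pow]
    field_simp
  rw [heq]
  have hber : 1 + (d:ℝ) * (-(2/s)) ≤ (1 + (-(2/s))) ^ d :=
    one_add_mul_le_pow (by
      have : 2/s ≤ 1 := by rw [div_le_one hs0]; linarith
      linarith) d
  calc 1 - 2 * (d:ℝ) / s = 1 + (d:ℝ) * (-(2/s)) := by ring
    _ ≤ (1 + (-(2/s))) ^ d := hber
    _ = (1 - 2/s) ^ d := by ring_nf

end
end
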